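/- arXiv:2509.11162 — 7 statements merged into one kernel-verified Lean document; each statement's English description precedes it below -/
import Mathlib

section
/- For all real numbers a > 1 and k > 0, the function f(t) = t·(a^{k/t} − 1) is strictly antitone on the positive reals: for all 0 < t₁ < t₂ we have f(t₂) < f(t₁). (Consequently, for fixed bandwidth, the offloading energy consumed by a task strictly decreases as the allowed offloading duration increases.) -/
open Real Set

theorem strictConvexOn_rpow_left {b : ℝ} (hb₀ : 0 < b) (hb₁ : b ≠ 1) :
    StrictConvexOn ℝ univ (fun x : ℝ => b ^ x) := by
  have hlog : log b ≠ 0 := log_ne_zero_of_pos_of_ne_one hb₀ hb₁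
  have hsurj : Function.Surjective (LinearMap.mul ℝ ℝ (log b)) := fun y =>
    ⟨y / log b, by simp [mul_div_cancel₀ _ hlog]⟩
  have hexp : StrictConvexOn ℝ (LinearMap.mul ℝ ℝ (log b) '' univ) exp := by
    rw [image_univ_of_surjective hsurj]
    exact strictConvexOn_exp
  convert hexp.comp_convexOn ((LinearMap.mul ℝ ℝ (log b)).convexOn convex_univ)
    (exp_monotone.monotoneOn _) (mul_right_injective₀ hlog).injOn using 1
  ext x
  simp [rpow_def_of_pos hb₀]

/-- Writing `t * (f (k / t) - f 0)` as `k` times the slope of the secant of `f` over `[0, k / t]`,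
the claim is the monotonicity of secant slopes of a strictly convex function. -/
theorem StrictConvexOn.strictAntiOn_mul_sub_comp_div {f : ℝ → ℝ}
    (hf : StrictConvexOn ℝ (Ici 0) f) {k : ℝ} (hk : 0 < k) :
    StrictAntiOn (fun t => t * (f (k / t) - f 0)) (Ioi 0) := by
  intro t₁ (ht₁ : 0 < t₁) t₂ (ht₂ : 0 < t₂) h12
  have hslope : ∀ t : ℝ, 0 < t →
      t * (f (k / t) - f 0) = k * ((f (k / t) - f 0) / (k / t - 0)) := by
    intro t ht
    rw [sub_zero]
    field_simp
  have hsecant := hf.secant_strict_mono self_mem_Ici (div_pos hk ht₂).le (div_pos hk ht₁).le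
    (div_pos hk ht₂).ne' (div_pos hk ht₁).ne' (div_lt_div_of_pos_left hk ht₁ h12)
  simp only [hslope t₁ ht₁, hslope t₂ ht₂]
  exact mul_lt_mul_of_pos_left hsecant hk

/-- For all real numbers `a > 1` and `k > 0`, the function `f t = t * (a ^ (k / t) - 1)`
(with real power) is strictly antitone on the positive reals: for all `0 < t₁ < t₂`,
`f t₂ < f t₁`. -/
theorem offload_energy_strict_antitone (a k : ℝ) (ha : 1 < a) (hk : 0 < k) :
    ∀ t₁ t₂ : ℝ, 0 < t₁ → t₁ < t₂ →
      t₂ * (a ^ (k / t₂) - 1) < t₁ * (a ^ (k / t₁) - 1) := by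
  intro t₁ t₂ ht₁ h12
  have hconvex := (strictConvexOn_rpow_left (zero_lt_one.trans ha) ha.ne').subset
    (subset_univ _) (convex_Ici 0)
  simpa only [rpow_zero] using hconvex.strictAntiOn_mul_sub_comp_div hk ht₁ (ht₁.trans h12) h12
end

section
/- Suppose a task is feasibly offloaded with bandwidth b > 0, computation allocation c > 0, and power p > 0, i.e., its offloading time t₀ = s/(b·b̄·log₂(1 + p·p̄·G/σ²)) satisfies the deadline constraint t₀ + δ + s·η/(c·c̄) ≤ d. Let B ≥ b and C ≥ c be enlarged allocations and set T := d − δ − s·η/(C·c̄). Then: (i) T ≥ t₀ > 0; (ii) the power P := (σ²/(p̄·G))·(2^{s/(T·B·b̄)} − 1) needed to offload within time T using bandwidth B satisfies 0 < P ≤ p; and (iii) the resulting offloading energy satisfies P·p̄·T ≤ p·p̄·t₀, so the saved energy E^l − P·p̄·T is at least E^l − p·p̄·t₀. -/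
/-!
The power needed to push `s` bits through bandwidth `b` in time `t` is
`σ2 / (pu * G) * (2 ^ (s / (t * b * bu)) - 1)`, which is antitone in both `b` and `t`; and since
`x ↦ 2 ^ x - 1` is convex and vanishes at `0`, its slope `(2 ^ x - 1) / x` increases, so the
energy `t * (2 ^ (k / t) - 1)` is antitone in `t` as well. Enlarging `C` only lengthens the time
budget `T` beyond `t₀`, and at `(b, t₀)` the power is exactly `p` because `t₀` inverts Shannon's
formula.
-/

open Real

lemma rpow_sub_one_div_le_rpow_sub_one_div {a u v : ℝ} (ha : 0 < a) (hu : 0 < u) (huv : u ≤ v) :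
    (a ^ u - 1) / u ≤ (a ^ v - 1) / v := by
  have h := (convexOn_rpow_left ha).secant_mono (Set.mem_univ 0) (Set.mem_univ u)
    (Set.mem_univ v) hu.ne' (hu.trans_le huv).ne' huv
  simpa only [rpow_zero, sub_zero] using h

lemma mul_rpow_div_sub_one_le_of_le {a k t₁ t₂ : ℝ} (ha : 0 < a) (hk : 0 < k) (ht₁ : 0 < t₁)
    (ht : t₁ ≤ t₂) : t₂ * (a ^ (k / t₂) - 1) ≤ t₁ * (a ^ (k / t₁) - 1) := by
  have ht₂ : 0 < t₂ := ht₁.trans_le ht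
  have hslope := rpow_sub_one_div_le_rpow_sub_one_div ha (div_pos hk ht₂)
    (div_le_div_of_nonneg_left hk.le ht₁ ht)
  calc t₂ * (a ^ (k / t₂) - 1) = k * ((a ^ (k / t₂) - 1) / (k / t₂)) := by field_simp
    _ ≤ k * ((a ^ (k / t₁) - 1) / (k / t₁)) := mul_le_mul_of_nonneg_left hslope hk.le
    _ = t₁ * (a ^ (k / t₁) - 1) := by field_simp

section TransmitPower

variable {s bu pu G σ2 : ℝ}

variable (s bu pu G σ2) in
noncomputable def transmitPower (b t : ℝ) : ℝ :=
  σ2 / (pu * G) * ((2 : ℝ) ^ (s / (t * b * bu)) - 1)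

lemma transmitPower_pos (hs : 0 < s) (hbu : 0 < bu) (hpu : 0 < pu) (hG : 0 < G) (hσ2 : 0 < σ2)
    {b t : ℝ} (hb : 0 < b) (ht : 0 < t) : 0 < transmitPower s bu pu G σ2 b t := by
  have : 1 < (2 : ℝ) ^ (s / (t * b * bu)) := one_lt_rpow one_lt_two (by positivity)
  unfold transmitPower
  exact mul_pos (by positivity) (sub_pos.2 this)

lemma transmitPower_le_of_le (hs : 0 < s) (hbu : 0 < bu) (hpu : 0 < pu) (hG : 0 < G)
    (hσ2 : 0 < σ2) {b B t T : ℝ} (hb : 0 < b) (ht : 0 < t) (hB : b ≤ B) (hT : t ≤ T) :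
    transmitPower s bu pu G σ2 B T ≤ transmitPower s bu pu G σ2 b t := by
  have hT₀ : 0 < T := ht.trans_le hT
  have hexp : s / (T * B * bu) ≤ s / (t * b * bu) := by
    apply div_le_div_of_nonneg_left hs.le (by positivity)
    gcongr
  unfold transmitPower
  gcongr
  exact one_le_two

lemma transmitPower_mul_le_of_le (hs : 0 < s) (hbu : 0 < bu) (hpu : 0 < pu) (hG : 0 < G)
    (hσ2 : 0 < σ2) {b B t T : ℝ} (hb : 0 < b) (ht : 0 < t) (hB : b ≤ B) (hT : t ≤ T) :
    transmitPower s bu pu G σ2 B T * T ≤ transmitPower s bu pu G σ2 b t * t := by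
  have hT₀ : 0 < T := ht.trans_le hT
  have hbandwidth : transmitPower s bu pu G σ2 B T * T ≤ transmitPower s bu pu G σ2 b T * T :=
    mul_le_mul_of_nonneg_right (transmitPower_le_of_le hs hbu hpu hG hσ2 hb hT₀ hB le_rfl) hT₀.le
  have hexp (τ : ℝ) (hτ : 0 < τ) : s / (τ * b * bu) = s / (b * bu) / τ := by field_simp
  have htime : T * ((2 : ℝ) ^ (s / (b * bu) / T) - 1) ≤ t * ((2 : ℝ) ^ (s / (b * bu) / t) - 1) :=
    mul_rpow_div_sub_one_le_of_le two_pos (by positivity) ht hT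
  refine hbandwidth.trans ?_
  unfold transmitPower
  rw [hexp T hT₀, hexp t ht, mul_assoc, mul_assoc, mul_comm _ T, mul_comm _ t]
  exact mul_le_mul_of_nonneg_left htime (by positivity)

lemma transmitPower_offloadTime (hs : 0 < s) (hbu : 0 < bu) (hpu : 0 < pu) (hG : 0 < G)
    (hσ2 : 0 < σ2) {b p : ℝ} (hb : 0 < b) (hp : 0 < p) :
    transmitPower s bu pu G σ2 b (s / (b * bu * logb 2 (1 + p * pu * G / σ2))) = p := by
  have hsnr : 0 < p * pu * G / σ2 := by positivity
  have hL : 0 < logb 2 (1 + p * pu * G / σ2) := logb_pos one_lt_two (by linarith)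
  have hexp : s / (s / (b * bu * logb 2 (1 + p * pu * G / σ2)) * b * bu) =
      logb 2 (1 + p * pu * G / σ2) := by
    field_simp
  unfold transmitPower
  rw [hexp, rpow_logb two_pos one_lt_two.ne' (by linarith)]
  field_simp
  ring

end TransmitPower

theorem enlarged_allocation_feasible_general (s η bu cu pu G σ2 d δ El : ℝ)
    (hs : 0 < s) (hη : 0 < η) (hbu : 0 < bu) (hcu : 0 < cu) (hpu : 0 < pu)
    (hG : 0 < G) (hσ2 : 0 < σ2)
    (b c p : ℝ) (hb : 0 < b) (hc : 0 < c) (hp : 0 < p)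
    (t₀ : ℝ) (ht₀ : t₀ = s / (b * bu * Real.logb 2 (1 + p * pu * G / σ2)))
    (hdeadline : t₀ + δ + s * η / (c * cu) ≤ d)
    (B C : ℝ) (hB : b ≤ B) (hC : c ≤ C)
    (T : ℝ) (hT : T = d - δ - s * η / (C * cu))
    (P : ℝ) (hP : P = (σ2 / (pu * G)) * ((2 : ℝ) ^ (s / (T * B * bu)) - 1)) :
    0 < t₀ ∧ t₀ ≤ T ∧ 0 < P ∧ P ≤ p ∧ P * pu * T ≤ p * pu * t₀ ∧
      El - p * pu * t₀ ≤ El - P * pu * T := by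
  have hsnr : 0 < p * pu * G / σ2 := by positivity
  have hL : 0 < logb 2 (1 + p * pu * G / σ2) := logb_pos one_lt_two (by linarith)
  have ht₀pos : 0 < t₀ := by rw [ht₀]; positivity
  have hcompute : s * η / (C * cu) ≤ s * η / (c * cu) := by gcongr
  have ht₀T : t₀ ≤ T := by rw [hT]; linarith
  have hpower : transmitPower s bu pu G σ2 b t₀ = p := by
    rw [ht₀]; exact transmitPower_offloadTime hs hbu hpu hG hσ2 hb hp
  change P = transmitPower s bu pu G σ2 B T at hP
  have hPpos : 0 < P := by
    rw [hP]; exact transmitPower_pos hs hbu hpu hG hσ2 (hb.trans_le hB) (ht₀pos.trans_le ht₀T)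
  have hPp : P ≤ p := by
    rw [hP, ← hpower]; exact transmitPower_le_of_le hs hbu hpu hG hσ2 hb ht₀pos hB ht₀T
  have henergy : P * T ≤ p * t₀ := by
    rw [hP, ← hpower]; exact transmitPower_mul_le_of_le hs hbu hpu hG hσ2 hb ht₀pos hB ht₀T
  have henergy_pu : P * pu * T ≤ p * pu * t₀ := by
    linarith [mul_le_mul_of_nonneg_left henergy hpu.le]
  exact ⟨ht₀pos, ht₀T, hPpos, hPp, henergy_pu, by linarith⟩

/-- Fix positive constants `s` (task size), `η` (cycles per bit), `bu, cu, pu`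
(bandwidth/computation/power units), `G` (channel gain), `σ2` (noise power), a deadline
`d > 0`, a backhaul delay `δ ≥ 0` and a local-processing energy `El`.  Suppose a task is
feasibly offloaded with bandwidth `b > 0`, computation allocation `c > 0` and power `p > 0`,
i.e., its offloading time `t₀ = s / (b * bu * log₂(1 + p * pu * G / σ2))` satisfies
`t₀ + δ + s * η / (c * cu) ≤ d`.  Let `B ≥ b` and `C ≥ c` be enlarged allocations and set
`T := d - δ - s * η / (C * cu)`.  Then (i) `T ≥ t₀ > 0`; (ii) the power
`P := (σ2 / (pu * G)) * (2 ^ (s / (T * B * bu)) - 1)` needed to offload within time `T` using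
bandwidth `B` satisfies `0 < P ≤ p`; and (iii) the resulting offloading energy satisfies
`P * pu * T ≤ p * pu * t₀`, hence the saved energy `El - P * pu * T` is at least
`El - p * pu * t₀`. -/
theorem enlarged_allocation_feasible (s η bu cu pu G σ2 d δ El : ℝ)
    (hs : 0 < s) (hη : 0 < η) (hbu : 0 < bu) (hcu : 0 < cu) (hpu : 0 < pu)
    (hG : 0 < G) (hσ2 : 0 < σ2) (hd : 0 < d) (hδ : 0 ≤ δ)
    (b c p : ℝ) (hb : 0 < b) (hc : 0 < c) (hp : 0 < p)
    (t₀ : ℝ) (ht₀ : t₀ = s / (b * bu * Real.logb 2 (1 + p * pu * G / σ2)))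
    (hdeadline : t₀ + δ + s * η / (c * cu) ≤ d)
    (B C : ℝ) (hB : b ≤ B) (hC : c ≤ C)
    (T : ℝ) (hT : T = d - δ - s * η / (C * cu))
    (P : ℝ) (hP : P = (σ2 / (pu * G)) * ((2 : ℝ) ^ (s / (T * B * bu)) - 1)) :
    0 < t₀ ∧ t₀ ≤ T ∧ 0 < P ∧ P ≤ p ∧ P * pu * T ≤ p * pu * t₀ ∧
      El - p * pu * t₀ ≤ El - P * pu * T :=
  enlarged_allocation_feasible_general s η bu cu pu G σ2 d δ El hs hη hbu hcu hpu hG hσ2 b c p hb hc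
    hp t₀ ht₀ hdeadline B C hB hC T hT P hP
end

section
/- Let φ > 1 be a real number and N ≥ 1 an integer. Set π = ⌈log_φ N⌉ and define B_m = ⌊φ^m⌋ for 0 ≤ m ≤ π − 1 and B_π = N. Then for every integer x with 1 ≤ x ≤ N there exists m with 0 ≤ m ≤ π such that x ≤ B_m and B_m < φ·x. -/
/-!
Round `x` up to the level `m = ⌈log_φ x⌉`, for which `x ≤ φ ^ m < φ * x` and `m ≤ π`. Below `π`,
`B m = ⌊φ ^ m⌋` still lies in `[x, φ ^ m]` because `x` is an integer; at `m = π` the level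
`B π = N` lies in `[x, φ ^ π]` as well.
-/

namespace Real

variable {b x : ℝ}

lemma le_zpow_ceil_logb (hb : 1 < b) (hx : 0 < x) : x ≤ b ^ ⌈logb b x⌉ := by
  rw [← rpow_intCast, ← logb_le_iff_le_rpow hb hx]
  exact Int.le_ceil _

lemma zpow_ceil_logb_lt_mul (hb : 1 < b) (hx : 0 < x) : b ^ ⌈logb b x⌉ < b * x := by
  have hpred : b ^ (⌈logb b x⌉ - 1) < x := by
    rw [← rpow_intCast, ← lt_logb_iff_rpow_lt hb hx]
    push_cast
    linarith [Int.ceil_lt_add_one (logb b x)]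
  calc b ^ ⌈logb b x⌉ = b * b ^ (⌈logb b x⌉ - 1) := by
        rw [← zpow_one_add₀ (by positivity), add_sub_cancel]
    _ < b * x := by gcongr

end Real

theorem discretization_roundup_general (φ : ℝ) (hφ : 1 < φ) (N : ℤ)
    (π : ℤ) (hπ : π = ⌈Real.logb φ (N : ℝ)⌉)
    (B : ℤ → ℤ)
    (hB : ∀ m : ℤ, 0 ≤ m → m < π → B m = ⌊φ ^ m⌋)
    (hBπ : B π = N) :
    ∀ x : ℤ, 1 ≤ x → x ≤ N →
      ∃ m : ℤ, 0 ≤ m ∧ m ≤ π ∧ x ≤ B m ∧ (B m : ℝ) < φ * (x : ℝ) := by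
  intro x hx1 hxN
  have hx0 : (0 : ℝ) < x := by exact_mod_cast hx1
  set m := ⌈Real.logb φ x⌉
  have hm0 : 0 ≤ m := Int.ceil_nonneg (Real.logb_nonneg hφ (by exact_mod_cast hx1))
  have hmπ : m ≤ π := hπ ▸ Int.ceil_mono (Real.logb_le_logb_of_le hφ hx0 (by exact_mod_cast hxN))
  have hBm : x ≤ B m ∧ (B m : ℝ) ≤ φ ^ m := by
    rcases hmπ.lt_or_eq with hlt | heq
    · rw [hB m hm0 hlt]
      exact ⟨Int.le_floor.2 (Real.le_zpow_ceil_logb hφ hx0), Int.floor_le _⟩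
    · rw [heq, hBπ, hπ]
      exact ⟨hxN, Real.le_zpow_ceil_logb hφ (hx0.trans_le (by exact_mod_cast hxN))⟩
  exact ⟨m, hm0, hmπ, hBm.1, hBm.2.trans_lt (Real.zpow_ceil_logb_lt_mul hφ hx0)⟩

/-- Let `φ > 1` be real and `N ≥ 1` an integer.  Set `π = ⌈log_φ N⌉` and define the
discretized levels `B m = ⌊φ ^ m⌋` for `0 ≤ m ≤ π - 1` and `B π = N`.  Then every integer
`x` with `1 ≤ x ≤ N` can be rounded up to some level: there exists `m` with `0 ≤ m ≤ π`,
`x ≤ B m` and `B m < φ * x`. -/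
theorem discretization_roundup (φ : ℝ) (hφ : 1 < φ) (N : ℤ) (hN : 1 ≤ N)
    (π : ℤ) (hπ : π = ⌈Real.logb φ (N : ℝ)⌉)
    (B : ℤ → ℤ)
    (hB : ∀ m : ℤ, 0 ≤ m → m < π → B m = ⌊φ ^ m⌋)
    (hBπ : B π = N) :
    ∀ x : ℤ, 1 ≤ x → x ≤ N →
      ∃ m : ℤ, 0 ≤ m ∧ m ≤ π ∧ x ≤ B m ∧ (B m : ℝ) < φ * (x : ℝ) :=
  discretization_roundup_general φ hφ N π hπ B hB hBπ
end

section
/- For every bucket-respecting selection c, the total selected value satisfies Σ_{r=1}^{n} a(c(r)) ≤ a(1) + Σ_{s=1}^{N} f(s)·a(s). That is, picking one item per unit bucket from the greedy ordering costs at most the total fractional value plus the single largest value. -/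
/-!
Since `a` is nonincreasing, `∑ u s * a s ≤ ∑ v s * a s` as soon as every prefix sum of `u` is at
most the corresponding prefix sum of `v` (Abel summation). Take `u s` to be the number of buckets
selecting item `s`. A bucket `r` with `c r ≤ t` has `r - 1 < F (c r) ≤ F t`, so there are at most
`F t + 1` of them: the prefix sums of `f` plus a unit mass on item `1`, which accounts for `a 1`.
-/

open Finset

theorem mul_sum_Icc_le_sum_Icc_mul_of_prefix_nonneg {d a : ℕ → ℝ} {t : ℕ}
    (ha : ∀ s, 1 ≤ s → s < t → a (s + 1) ≤ a s)
    (hd : ∀ k ≤ t, 0 ≤ ∑ s ∈ Icc 1 k, d s) :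
    (∑ s ∈ Icc 1 t, d s) * a t ≤ ∑ s ∈ Icc 1 t, d s * a s := by
  induction t with
  | zero => simp
  | succ t ih =>
    have hprev := ih (fun s hs hst => ha s hs (by omega)) (fun k hk => hd k (by omega))
    have hslide : (∑ s ∈ Icc 1 t, d s) * a (t + 1) ≤ (∑ s ∈ Icc 1 t, d s) * a t := by
      rcases t.eq_zero_or_pos with rfl | ht
      · simp
      · exact mul_le_mul_of_nonneg_left (ha t ht (by omega)) (hd t (by omega))
    rw [sum_Icc_succ_top (by omega), sum_Icc_succ_top (by omega)]
    linarith

theorem sum_Icc_mul_le_sum_Icc_mul_of_prefix_sum_le {u v a : ℕ → ℝ} {N : ℕ}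
    (ha : ∀ s, 1 ≤ s → s < N → a (s + 1) ≤ a s) (haN : 0 ≤ a N)
    (huv : ∀ t ≤ N, ∑ s ∈ Icc 1 t, u s ≤ ∑ s ∈ Icc 1 t, v s) :
    ∑ s ∈ Icc 1 N, u s * a s ≤ ∑ s ∈ Icc 1 N, v s * a s := by
  have h := mul_sum_Icc_le_sum_Icc_mul_of_prefix_nonneg (d := v - u) ha
    (fun k hk => by simpa [sum_sub_distrib] using huv k hk)
  have hN : 0 ≤ ∑ s ∈ Icc 1 N, (v - u) s := by simpa [sum_sub_distrib] using huv N le_rfl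
  have := (mul_nonneg hN haN).trans h
  simp only [Pi.sub_apply, sub_mul, sum_sub_distrib] at this
  linarith

theorem sum_comp_le_sum_Icc_mul_of_card_le {S : Finset ℕ} {c : ℕ → ℕ} {v a : ℕ → ℝ} {N : ℕ}
    (ha : ∀ s, 1 ≤ s → s < N → a (s + 1) ≤ a s) (haN : 0 ≤ a N)
    (hc : ∀ r ∈ S, c r ∈ Icc 1 N)
    (hcard : ∀ t, 1 ≤ t → t ≤ N → (#{r ∈ S | c r ≤ t} : ℝ) ≤ ∑ s ∈ Icc 1 t, v s) :
    ∑ r ∈ S, a (c r) ≤ ∑ s ∈ Icc 1 N, v s * a s := by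
  set u : ℕ → ℝ := fun s => #{r ∈ S | c r = s}
  have hsum : ∑ r ∈ S, a (c r) = ∑ s ∈ Icc 1 N, u s * a s := by
    rw [← sum_fiberwise_of_maps_to hc]
    refine sum_congr rfl fun s _ => ?_
    rw [sum_congr rfl fun r hr => congrArg a (mem_filter.mp hr).2, sum_const, nsmul_eq_mul]
  have hprefix : ∀ t ≤ N, ∑ s ∈ Icc 1 t, u s = #{r ∈ S | c r ≤ t} := by
    intro t ht
    rw [card_eq_sum_card_fiberwise (t := Icc 1 t)]
    · push_cast
      refine sum_congr rfl fun s hs => ?_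
      rw [filter_filter,
        filter_congr fun r _ => ⟨And.right, fun h => ⟨h.trans_le (mem_Icc.mp hs).2, h⟩⟩]
    · intro r hr
      rw [coe_filter] at hr
      exact mem_Icc.mpr ⟨(mem_Icc.mp (hc r hr.1)).1, hr.2⟩
  rw [hsum]
  refine sum_Icc_mul_le_sum_Icc_mul_of_prefix_sum_le ha haN fun t ht => ?_
  rw [hprefix t ht]
  rcases t.eq_zero_or_pos with rfl | ht0
  · simpa using fun r hr => (Nat.one_le_iff_ne_zero.mp (mem_Icc.mp (hc r hr)).1)
  · exact hcard t ht0 ht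

theorem card_le_of_forall_sub_one_lt {S : Finset ℕ} {x : ℝ} (hx : 0 ≤ x)
    (hS : ∀ r ∈ S, 1 ≤ r ∧ (r : ℝ) - 1 < x) : (#S : ℝ) ≤ x + 1 := by
  have hsub : S ⊆ Icc 1 ⌈x⌉₊ := fun r hr => by
    obtain ⟨h1, hlt⟩ := hS r hr
    have : (r : ℝ) < ⌈x⌉₊ + 1 := by linarith [Nat.le_ceil x]
    exact mem_Icc.mpr ⟨h1, by exact_mod_cast Nat.lt_add_one_iff.mp (by exact_mod_cast this)⟩
  calc (#S : ℝ) ≤ ⌈x⌉₊ := by exact_mod_cast (card_le_card hsub).trans (Nat.card_Icc 1 _).le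
    _ ≤ x + 1 := (Nat.ceil_lt_add_one hx).le

theorem bucket_selection_bound_general (N : ℕ) (hN : 1 ≤ N) (a f : ℕ → ℝ)
    (ha_anti : ∀ s : ℕ, 1 ≤ s → s < N → a (s + 1) ≤ a s)
    (ha_nonneg : ∀ s : ℕ, 1 ≤ s → s ≤ N → 0 ≤ a s)
    (hf_nonneg : ∀ s : ℕ, 1 ≤ s → s ≤ N → 0 ≤ f s)
    (F : ℕ → ℝ) (hF : ∀ s : ℕ, F s = ∑ t ∈ Finset.Icc 1 s, f t)
    (n : ℕ)
    (c : ℕ → ℕ)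
    (hc : ∀ r : ℕ, 1 ≤ r → r ≤ n →
      1 ≤ c r ∧ c r ≤ N ∧ F (c r - 1) < (r : ℝ) ∧ (r : ℝ) - 1 < F (c r)) :
    ∑ r ∈ Finset.Icc 1 n, a (c r) ≤ a 1 + ∑ s ∈ Finset.Icc 1 N, f s * a s := by
  have hF_mono : ∀ s t, s ≤ t → t ≤ N → F s ≤ F t := fun s t hst htN => by
    rw [hF, hF]
    exact sum_le_sum_of_subset_of_nonneg (Icc_subset_Icc_right hst)
      fun i hi _ => hf_nonneg i (mem_Icc.mp hi).1 ((mem_Icc.mp hi).2.trans htN)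
  have hF_nonneg : ∀ t ≤ N, 0 ≤ F t := fun t htN => by
    simpa [hF 0] using hF_mono 0 t t.zero_le htN
  have hsel : ∀ r ∈ Icc 1 n, c r ∈ Icc 1 N ∧ (r : ℝ) - 1 < F (c r) := fun r hr => by
    obtain ⟨hcr1, hcrN, -, hlt⟩ := hc r (mem_Icc.mp hr).1 (mem_Icc.mp hr).2
    exact ⟨mem_Icc.mpr ⟨hcr1, hcrN⟩, hlt⟩
  have hcard : ∀ t, 1 ≤ t → t ≤ N → (#{r ∈ Icc 1 n | c r ≤ t} : ℝ) ≤
      ∑ s ∈ Icc 1 t, (f s + if s = 1 then 1 else 0) := fun t ht htN => by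
    rw [sum_add_distrib, ← hF t, sum_ite_eq', if_pos (mem_Icc.mpr ⟨le_rfl, ht⟩)]
    refine card_le_of_forall_sub_one_lt (hF_nonneg t htN) fun r hr => ?_
    obtain ⟨hr_mem, hcrt⟩ := mem_filter.mp hr
    exact ⟨(mem_Icc.mp hr_mem).1, (hsel r hr_mem).2.trans_le (hF_mono _ _ hcrt htN)⟩
  calc ∑ r ∈ Icc 1 n, a (c r)
      ≤ ∑ s ∈ Icc 1 N, (f s + if s = 1 then 1 else 0) * a s :=
        sum_comp_le_sum_Icc_mul_of_card_le ha_anti (ha_nonneg N hN le_rfl)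
          (fun r hr => (hsel r hr).1) hcard
    _ = a 1 + ∑ s ∈ Icc 1 N, f s * a s := by
        simp [add_mul, sum_add_distrib, hN, add_comm]

/-- Let `N ≥ 1`, `a : {1,…,N} → ℝ` a nonincreasing sequence of nonnegative values and
`f : {1,…,N} → ℝ` fractions in `[0,1]`.  With prefix sums `F s = f 1 + ⋯ + f s` (so
`F 0 = 0`), `F N > 0`, and `n = ⌈F N⌉`, any bucket-respecting selection
`c : {1,…,n} → {1,…,N}` (i.e. `F (c r - 1) < r` and `F (c r) > r - 1` for each bucket `r`)
satisfies `Σ_{r=1}^{n} a (c r) ≤ a 1 + Σ_{s=1}^{N} f s * a s`. -/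
theorem bucket_selection_bound (N : ℕ) (hN : 1 ≤ N) (a f : ℕ → ℝ)
    (ha_anti : ∀ s : ℕ, 1 ≤ s → s < N → a (s + 1) ≤ a s)
    (ha_nonneg : ∀ s : ℕ, 1 ≤ s → s ≤ N → 0 ≤ a s)
    (hf_nonneg : ∀ s : ℕ, 1 ≤ s → s ≤ N → 0 ≤ f s)
    (hf_le_one : ∀ s : ℕ, 1 ≤ s → s ≤ N → f s ≤ 1)
    (F : ℕ → ℝ) (hF : ∀ s : ℕ, F s = ∑ t ∈ Finset.Icc 1 s, f t)
    (hFN : 0 < F N)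
    (n : ℕ) (hn : n = ⌈F N⌉₊)
    (c : ℕ → ℕ)
    (hc : ∀ r : ℕ, 1 ≤ r → r ≤ n →
      1 ≤ c r ∧ c r ≤ N ∧ F (c r - 1) < (r : ℝ) ∧ (r : ℝ) - 1 < F (c r)) :
    ∑ r ∈ Finset.Icc 1 n, a (c r) ≤ a 1 + ∑ s ∈ Finset.Icc 1 N, f s * a s :=
  bucket_selection_bound_general N hN a f ha_anti ha_nonneg hf_nonneg F hF n c hc
end

section
/- Suppose additionally that there is a capacity β > 0 and a bound α with 0 ≤ α < 1 such that a(s) ≤ α·β for every item s and Σ_{s=1}^{N} f(s)·a(s) ≤ (1−α)·β. Then every bucket-respecting selection c satisfies Σ_{r=1}^{n} a(c(r)) ≤ β. That is, if each single allocation is capped at an α-fraction of the capacity and the fractional LP solution uses at most a (1−α)-fraction of the capacity, then the rounded integral selection never exceeds the capacity. -/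
/-!
Lay the items end to end on the line, item `s` occupying `[F (s - 1), F s]`. The item chosen for
bucket `r` reaches beyond `r - 1`, so every item with mass in the previous unit bucket
`[r - 2, r - 1]` comes no later and, `a` being nonincreasing, is worth at least as much. Hence
`a (c r)` is at most the mass-weighted average of `a` over that bucket, and summing over `r ≥ 2`
bounds all but the first selected value by `∑ f s * a s ≤ (1 - α) * β`; the first costs at
most `α * β`.
-/

lemma sum_Icc_sub_pred (g : ℕ → ℝ) (N : ℕ) :
    ∑ s ∈ Finset.Icc 1 N, (g s - g (s - 1)) = g N - g 0 := by
  induction N with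
  | zero => simp
  | succ N ih => rw [Finset.sum_Icc_succ_top (by omega), ih, Nat.add_sub_cancel]; ring

lemma le_sum_mul_of_sum_eq_one {ι : Type*} {t : Finset ι} {w x : ι → ℝ} {b : ℝ}
    (hw : ∀ i ∈ t, 0 ≤ w i) (hsum : ∑ i ∈ t, w i = 1) (hb : ∀ i ∈ t, 0 < w i → b ≤ x i) :
    b ≤ ∑ i ∈ t, w i * x i := by
  calc b = ∑ i ∈ t, w i * b := by rw [← Finset.sum_mul, hsum, one_mul]
    _ ≤ ∑ i ∈ t, w i * x i := Finset.sum_le_sum fun i hi => by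
      rcases (hw i hi).eq_or_lt with h | h
      · simp [← h]
      · exact mul_le_mul_of_nonneg_left (hb i hi h) h.le

lemma sum_Icc_one_succ_eq_sum_range_add (m : ℕ) (g : ℕ → ℝ) :
    ∑ r ∈ Finset.Icc 1 (m + 1), g r = ∑ k ∈ Finset.range m, g (k + 2) + g 1 := by
  rw [← Finset.Ico_add_one_right_eq_Icc, Finset.sum_Ico_eq_sum_range, Nat.add_sub_cancel,
    Finset.sum_range_succ']
  simp only [add_comm 1, add_assoc, one_add_one_eq_two, zero_add]

namespace BucketSelection

/-- The length of `[F (s - 1), F s] ∩ [k, k + 1]` when `0 ≤ F (s - 1) ≤ F s`. -/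
def overlap (F : ℕ → ℝ) (k s : ℕ) : ℝ :=
  (min (F s) (k + 1) - min (F (s - 1)) (k + 1)) - (min (F s) k - min (F (s - 1)) k)

variable {F : ℕ → ℝ} {k s : ℕ}

lemma overlap_nonneg (h : F (s - 1) ≤ F s) : 0 ≤ overlap F k s := by
  unfold overlap
  rcases le_total (F s) k with h₁ | h₁ <;> rcases le_total (F (s - 1)) k with h₂ | h₂ <;>
    simp only [min_def] <;> split_ifs <;> linarith

lemma lt_of_overlap_pos (h : F (s - 1) ≤ F s) (hpos : 0 < overlap F k s) :
    F (s - 1) < k + 1 := by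
  by_contra! hk
  unfold overlap at hpos
  rw [min_eq_right hk, min_eq_right (hk.trans h), min_eq_right (by linarith),
    min_eq_right (by linarith)] at hpos
  linarith

lemma sum_overlap_items {N : ℕ} (hF0 : F 0 = 0) (hk : k + 1 ≤ F N) :
    ∑ s ∈ Finset.Icc 1 N, overlap F k s = 1 := by
  have := sum_Icc_sub_pred (fun s => min (F s) (k + 1) - min (F s) k) N
  rw [hF0, min_eq_right hk, min_eq_right (by linarith), min_eq_left (by positivity),
    min_eq_left (by positivity)] at this
  calc ∑ s ∈ Finset.Icc 1 N, overlap F k s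
      = ∑ s ∈ Finset.Icc 1 N, (min (F s) (k + 1) - min (F s) k
          - (min (F (s - 1)) (k + 1) - min (F (s - 1)) k)) :=
        Finset.sum_congr rfl fun s _ => by unfold overlap; ring
    _ = 1 := by rw [this]; ring

lemma sum_overlap_buckets_le (h₀ : 0 ≤ F (s - 1)) (h : F (s - 1) ≤ F s) (m : ℕ) :
    ∑ k ∈ Finset.range m, overlap F k s ≤ F s - F (s - 1) := by
  have htel := Finset.sum_range_sub (fun k : ℕ => min (F s) k - min (F (s - 1)) k) m
  simp only [Nat.cast_add, Nat.cast_one, Nat.cast_zero, min_eq_right (h₀.trans h),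
    min_eq_right h₀, sub_self, sub_zero] at htel
  change ∑ k ∈ Finset.range m, overlap F k s = _ at htel
  rw [htel]
  rcases le_total (F s) m with h₁ | h₁ <;> rcases le_total (F (s - 1)) m with h₂ | h₂ <;>
    simp only [min_def] <;> split_ifs <;> linarith

variable {N : ℕ} {a : ℕ → ℝ}

lemma apply_pred_le (hF : MonotoneOn F (Set.Iic N)) (hs : s ≤ N) : F (s - 1) ≤ F s :=
  hF (Set.mem_Iic.2 (by omega)) (Set.mem_Iic.2 hs) (Nat.sub_le s 1)

lemma le_sum_overlap_mul {c : ℕ} (hF : MonotoneOn F (Set.Iic N)) (hF0 : F 0 = 0)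
    (ha : AntitoneOn a (Set.Icc 1 N)) (hc : c ≤ N) (hk : (k : ℝ) + 1 < F c) :
    a c ≤ ∑ s ∈ Finset.Icc 1 N, overlap F k s * a s := by
  have hstep : ∀ s ∈ Finset.Icc 1 N, F (s - 1) ≤ F s := fun s hs =>
    apply_pred_le hF (Finset.mem_Icc.1 hs).2
  have hkN : (k : ℝ) + 1 ≤ F N := hk.le.trans (hF (Set.mem_Iic.2 hc) (Set.mem_Iic.2 le_rfl) hc)
  refine le_sum_mul_of_sum_eq_one (fun s hs => overlap_nonneg (hstep s hs))
    (sum_overlap_items hF0 hkN) fun s hs hpos => ?_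
  obtain ⟨hs₁, hsN⟩ := Finset.mem_Icc.1 hs
  have hsc : s - 1 < c := hF.reflect_lt (Set.mem_Iic.2 (by omega)) (Set.mem_Iic.2 hc)
    ((lt_of_overlap_pos (hstep s hs) hpos).trans hk)
  exact ha ⟨hs₁, hsN⟩ ⟨by omega, hc⟩ (by omega)

lemma sum_selection_le {m : ℕ} {c : ℕ → ℕ} (hF : MonotoneOn F (Set.Iic N)) (hF0 : F 0 = 0)
    (ha : AntitoneOn a (Set.Icc 1 N)) (ha₀ : ∀ s ∈ Finset.Icc 1 N, 0 ≤ a s)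
    (hc : ∀ k < m, c k ≤ N ∧ (k : ℝ) + 1 < F (c k)) :
    ∑ k ∈ Finset.range m, a (c k) ≤ ∑ s ∈ Finset.Icc 1 N, (F s - F (s - 1)) * a s := by
  calc ∑ k ∈ Finset.range m, a (c k)
      ≤ ∑ k ∈ Finset.range m, ∑ s ∈ Finset.Icc 1 N, overlap F k s * a s :=
        Finset.sum_le_sum fun k hk =>
          have hck := hc k (Finset.mem_range.1 hk)
          le_sum_overlap_mul hF hF0 ha hck.1 hck.2
    _ = ∑ s ∈ Finset.Icc 1 N, (∑ k ∈ Finset.range m, overlap F k s) * a s := by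
        rw [Finset.sum_comm]
        simp only [Finset.sum_mul]
    _ ≤ ∑ s ∈ Finset.Icc 1 N, (F s - F (s - 1)) * a s := by
        refine Finset.sum_le_sum fun s hs => mul_le_mul_of_nonneg_right ?_ (ha₀ s hs)
        have hsN := (Finset.mem_Icc.1 hs).2
        exact sum_overlap_buckets_le
          (hF0 ▸ hF (Set.mem_Iic.2 (Nat.zero_le N)) (Set.mem_Iic.2 (by omega)) (Nat.zero_le _))
          (apply_pred_le hF hsN) m

end BucketSelection

open BucketSelection

theorem bucket_selection_capacity_general (N : ℕ) (a f : ℕ → ℝ)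
    (ha_anti : ∀ s : ℕ, 1 ≤ s → s < N → a (s + 1) ≤ a s)
    (ha_nonneg : ∀ s : ℕ, 1 ≤ s → s ≤ N → 0 ≤ a s)
    (hf_nonneg : ∀ s : ℕ, 1 ≤ s → s ≤ N → 0 ≤ f s)
    (F : ℕ → ℝ) (hF : ∀ s : ℕ, F s = ∑ t ∈ Finset.Icc 1 s, f t)
    (n : ℕ)
    (c : ℕ → ℕ)
    (hc : ∀ r : ℕ, 1 ≤ r → r ≤ n →
      1 ≤ c r ∧ c r ≤ N ∧ F (c r - 1) < (r : ℝ) ∧ (r : ℝ) - 1 < F (c r))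
    (β α : ℝ) (hβ : 0 < β)
    (ha_cap : ∀ s : ℕ, 1 ≤ s → s ≤ N → a s ≤ α * β)
    (hfa_cap : ∑ s ∈ Finset.Icc 1 N, f s * a s ≤ (1 - α) * β) :
    ∑ r ∈ Finset.Icc 1 n, a (c r) ≤ β := by
  have hf : ∀ s, 1 ≤ s → F s - F (s - 1) = f s := fun s hs => by
    obtain ⟨t, rfl⟩ := Nat.exists_eq_add_of_le' hs
    rw [hF, hF, Finset.sum_Icc_succ_top (by omega), Nat.add_sub_cancel]
    ring
  have hF_mono : MonotoneOn F (Set.Iic N) :=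
    monotoneOn_of_le_succ Set.ordConnected_Iic fun s _ _ hs => by
      have hstep := hf (s + 1) (by omega)
      rw [Nat.add_sub_cancel] at hstep
      rw [Order.succ_eq_add_one] at hs ⊢
      linarith [hf_nonneg (s + 1) (by omega) hs]
  have ha_anti' : AntitoneOn a (Set.Icc 1 N) :=
    antitoneOn_of_succ_le Set.ordConnected_Icc fun s _ hs hs' =>
      ha_anti s hs.1 (Order.succ_le_iff.1 hs'.2)
  rcases n with _ | m
  · simpa using hβ.le
  rw [sum_Icc_one_succ_eq_sum_range_add]
  obtain ⟨hc₁, hc₁N, -⟩ := hc 1 le_rfl (by omega)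
  have tail := sum_selection_le (m := m) (c := fun k => c (k + 2)) hF_mono (by simp [hF]) ha_anti'
    (fun s hs => ha_nonneg s (Finset.mem_Icc.1 hs).1 (Finset.mem_Icc.1 hs).2) fun k hk => by
      obtain ⟨-, hcN, -, hcF⟩ := hc (k + 2) (by omega) (by omega)
      exact ⟨hcN, by push_cast at hcF; linarith⟩
  have hmass : ∑ s ∈ Finset.Icc 1 N, (F s - F (s - 1)) * a s = ∑ s ∈ Finset.Icc 1 N, f s * a s :=
    Finset.sum_congr rfl fun s hs => by rw [hf s (Finset.mem_Icc.1 hs).1]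
  linarith [ha_cap (c 1) hc₁ hc₁N]

/-- Same setup as the bucket-selection bound: `N ≥ 1`, `a` nonincreasing and nonnegative on
`{1,…,N}`, fractions `f` in `[0,1]`, prefix sums `F`, `F N > 0`, `n = ⌈F N⌉`, and a
bucket-respecting selection `c`.  Suppose additionally there is a capacity `β > 0` and a
bound `α` with `0 ≤ α < 1` such that `a s ≤ α * β` for every item `s` and
`Σ_{s=1}^{N} f s * a s ≤ (1 - α) * β`.  Then `Σ_{r=1}^{n} a (c r) ≤ β`. -/
theorem bucket_selection_capacity (N : ℕ) (hN : 1 ≤ N) (a f : ℕ → ℝ)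
    (ha_anti : ∀ s : ℕ, 1 ≤ s → s < N → a (s + 1) ≤ a s)
    (ha_nonneg : ∀ s : ℕ, 1 ≤ s → s ≤ N → 0 ≤ a s)
    (hf_nonneg : ∀ s : ℕ, 1 ≤ s → s ≤ N → 0 ≤ f s)
    (hf_le_one : ∀ s : ℕ, 1 ≤ s → s ≤ N → f s ≤ 1)
    (F : ℕ → ℝ) (hF : ∀ s : ℕ, F s = ∑ t ∈ Finset.Icc 1 s, f t)
    (hFN : 0 < F N)
    (n : ℕ) (hn : n = ⌈F N⌉₊)
    (c : ℕ → ℕ)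
    (hc : ∀ r : ℕ, 1 ≤ r → r ≤ n →
      1 ≤ c r ∧ c r ≤ N ∧ F (c r - 1) < (r : ℝ) ∧ (r : ℝ) - 1 < F (c r))
    (β α : ℝ) (hβ : 0 < β) (hα0 : 0 ≤ α) (hα1 : α < 1)
    (ha_cap : ∀ s : ℕ, 1 ≤ s → s ≤ N → a s ≤ α * β)
    (hfa_cap : ∑ s ∈ Finset.Icc 1 N, f s * a s ≤ (1 - α) * β) :
    ∑ r ∈ Finset.Icc 1 n, a (c r) ≤ β :=
  bucket_selection_capacity_general N a f ha_anti ha_nonneg hf_nonneg F hF n c hc β α hβ ha_cap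
    hfa_cap
end

section
/- There exists a fragment assignment g : {1,…,N} × {1,…,n} → ℝ such that: (i) g(s,r) ≥ 0 for all s, r; (ii) Σ_{r=1}^{n} g(s,r) = f(s) for every item s; (iii) Σ_{s=1}^{N} g(s,r) ≤ 1 for every bucket r, with equality for every r ≤ n − 1; (iv) each item s has g(s,r) > 0 for at most two values of r, and these are consecutive; and (v) the assignment respects the item order: if s < s', g(s,r) > 0 and g(s',r') > 0, then r ≤ r'. (This is the correctness of the greedy bucket construction that splits the sorted fractional mass into n unit-capacity buckets, creating at most two fragments per item.) -/
/-!
Lay the items end to end on the half-line, item `s` occupying `[F (s - 1), F s]`, and let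
bucket `r` be `[r - 1, r]`; bucket `r` receives from item `s` the length of the overlap. Once a
mass `y` is laid down, bucket `r` holds `max 0 (min 1 (y - (r - 1)))`, and these levels sum to
`min m y` over the first `m` buckets, which gives the row and column sums. An item of length at
most one meets at most two buckets, necessarily adjacent, and items laid out in order meet
buckets in order.
-/

open Finset

noncomputable def bucketLevel (r : ℕ) (y : ℝ) : ℝ :=
  max 0 (min 1 (y - ((r : ℝ) - 1)))

namespace bucketLevel

lemma monotone (r : ℕ) : Monotone (bucketLevel r) := fun _ _ h =>
  max_le_max le_rfl (min_le_min le_rfl (by linarith))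

lemma nonneg (r : ℕ) (y : ℝ) : 0 ≤ bucketLevel r y := le_max_left _ _

lemma le_one (r : ℕ) (y : ℝ) : bucketLevel r y ≤ 1 :=
  max_le zero_le_one (min_le_left _ _)

lemma eq_zero_of_le {r : ℕ} {y : ℝ} (h : y ≤ r - 1) : bucketLevel r y = 0 :=
  max_eq_left (le_trans (min_le_right _ _) (by linarith))

lemma eq_one_of_le {r : ℕ} {y : ℝ} (h : (r : ℝ) ≤ y) : bucketLevel r y = 1 := by
  rw [bucketLevel, min_eq_left (by linarith), max_eq_right zero_le_one]

lemma sum_Icc (m : ℕ) {y : ℝ} (hy : 0 ≤ y) :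
    ∑ r ∈ Icc 1 m, bucketLevel r y = min (m : ℝ) y := by
  induction m with
  | zero => simp [hy]
  | succ m ih =>
    rw [sum_Icc_succ_top (by omega), ih, bucketLevel]
    push_cast
    simp only [max_def, min_def]
    split_ifs <;> linarith

end bucketLevel

lemma sum_Icc_one_sub_pred {M : Type*} [AddCommGroup M] (G : ℕ → M) (N : ℕ) :
    ∑ s ∈ Icc 1 N, (G s - G (s - 1)) = G N - G 0 := by
  induction N with
  | zero => simp
  | succ N ih =>
    rw [sum_Icc_succ_top (by omega), ih, Nat.add_sub_cancel]
    abel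

noncomputable def fragment (F : ℕ → ℝ) (s r : ℕ) : ℝ :=
  bucketLevel r (F s) - bucketLevel r (F (s - 1))

namespace fragment

variable {F : ℕ → ℝ}

lemma nonneg {s : ℕ} (h : F (s - 1) ≤ F s) (r : ℕ) : 0 ≤ fragment F s r :=
  sub_nonneg.2 (bucketLevel.monotone r h)

lemma sum_buckets {s m : ℕ} (h0 : 0 ≤ F (s - 1)) (h : F (s - 1) ≤ F s) (hm : F s ≤ m) :
    ∑ r ∈ Icc 1 m, fragment F s r = F s - F (s - 1) := by
  unfold fragment
  rw [sum_sub_distrib, bucketLevel.sum_Icc m (h0.trans h), bucketLevel.sum_Icc m h0,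
    min_eq_right hm, min_eq_right (h.trans hm)]

lemma sum_items (N r : ℕ) :
    ∑ s ∈ Icc 1 N, fragment F s r = bucketLevel r (F N) - bucketLevel r (F 0) :=
  sum_Icc_one_sub_pred (fun s => bucketLevel r (F s)) N

lemma lt_and_lt_of_pos {s r : ℕ} (h : 0 < fragment F s r) :
    (r : ℝ) - 1 < F s ∧ F (s - 1) < r := by
  unfold fragment at h
  constructor
  · by_contra! hs
    linarith [bucketLevel.eq_zero_of_le hs, bucketLevel.nonneg r (F (s - 1))]
  · by_contra! hs
    linarith [bucketLevel.eq_one_of_le hs, bucketLevel.le_one r (F s)]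

lemma eq_succ_of_pos {s r r' : ℕ} (hF : F s ≤ F (s - 1) + 1) (hrr' : r < r')
    (h : 0 < fragment F s r) (h' : 0 < fragment F s r') : r' = r + 1 := by
  have hr := (lt_and_lt_of_pos h).2
  have hr' := (lt_and_lt_of_pos h').1
  have : r' < r + 2 := by exact_mod_cast (by linarith : (r' : ℝ) < r + 2)
  omega

lemma le_of_pos {s s' r r' : ℕ} (hF : F s ≤ F (s' - 1))
    (h : 0 < fragment F s r) (h' : 0 < fragment F s' r') : r ≤ r' := by
  have hr := (lt_and_lt_of_pos h).1
  have hr' := (lt_and_lt_of_pos h').2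
  have : r < r' + 1 := by exact_mod_cast (by linarith : (r : ℝ) < r' + 1)
  omega

end fragment

lemma sum_Icc_one_pred_add {M : Type*} [AddCommMonoid M] (f : ℕ → M) {s : ℕ} (hs : 1 ≤ s) :
    ∑ t ∈ Icc 1 (s - 1), f t + f s = ∑ t ∈ Icc 1 s, f t := by
  obtain ⟨k, rfl⟩ : ∃ k, s = k + 1 := ⟨s - 1, by omega⟩
  rw [sum_Icc_succ_top (by omega), Nat.add_sub_cancel]

lemma sum_Icc_one_mono {M : Type*} [AddCommMonoid M] [PartialOrder M] [IsOrderedAddMonoid M]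
    {f : ℕ → M} {N : ℕ} (hf : ∀ t, 1 ≤ t → t ≤ N → 0 ≤ f t) {s s' : ℕ} (h : s ≤ s')
    (h' : s' ≤ N) : ∑ t ∈ Icc 1 s, f t ≤ ∑ t ∈ Icc 1 s', f t :=
  sum_le_sum_of_subset_of_nonneg (Icc_subset_Icc_right h) fun t ht _ =>
    hf t (mem_Icc.1 ht).1 ((mem_Icc.1 ht).2.trans h')

theorem greedy_bucket_construction_general (N : ℕ) (f : ℕ → ℝ)
    (hf_nonneg : ∀ s : ℕ, 1 ≤ s → s ≤ N → 0 ≤ f s)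
    (hf_le_one : ∀ s : ℕ, 1 ≤ s → s ≤ N → f s ≤ 1)
    (F : ℕ → ℝ) (hF : ∀ s : ℕ, F s = ∑ t ∈ Finset.Icc 1 s, f t)
    (n : ℕ) (hn : n = ⌈F N⌉₊) :
    ∃ g : ℕ → ℕ → ℝ,
      (∀ s r : ℕ, 1 ≤ s → s ≤ N → 1 ≤ r → r ≤ n → 0 ≤ g s r) ∧
      (∀ s : ℕ, 1 ≤ s → s ≤ N → ∑ r ∈ Finset.Icc 1 n, g s r = f s) ∧
      (∀ r : ℕ, 1 ≤ r → r ≤ n → ∑ s ∈ Finset.Icc 1 N, g s r ≤ 1) ∧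
      (∀ r : ℕ, 1 ≤ r → r ≤ n - 1 → ∑ s ∈ Finset.Icc 1 N, g s r = 1) ∧
      (∀ s r r' : ℕ, 1 ≤ s → s ≤ N → 1 ≤ r → r ≤ n → 1 ≤ r' → r' ≤ n → r < r' →
        0 < g s r → 0 < g s r' → r' = r + 1) ∧
      (∀ s s' r r' : ℕ, 1 ≤ s → s ≤ N → 1 ≤ s' → s' ≤ N → s < s' →
        1 ≤ r → r ≤ n → 1 ≤ r' → r' ≤ n → 0 < g s r → 0 < g s' r' → r ≤ r') := by
  have hstep : ∀ s, 1 ≤ s → F s = F (s - 1) + f s := fun s hs => by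
    rw [hF, hF, sum_Icc_one_pred_add f hs]
  have hmono : ∀ s s', s ≤ s' → s' ≤ N → F s ≤ F s' := fun s s' h h' => by
    rw [hF, hF]; exact sum_Icc_one_mono hf_nonneg h h'
  have hF0 : F 0 = 0 := by simp [hF]
  have hFn : F N ≤ n := hn ▸ Nat.le_ceil _
  have hlevel_zero : ∀ r : ℕ, 1 ≤ r → bucketLevel r (F 0) = 0 := fun r hr =>
    bucketLevel.eq_zero_of_le (by simp [hF0, hr])
  refine ⟨fragment F, fun s r hs hsN _ _ => fragment.nonneg (hmono _ _ (by omega) hsN) r,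
    fun s hs hsN => ?_, fun r hr _ => ?_, fun r hr hrn => ?_,
    fun s r r' hs hsN _ _ _ _ hrr' => fragment.eq_succ_of_pos ?_ hrr',
    fun s s' r r' _ _ _ hs'N hss' _ _ _ _ =>
      fragment.le_of_pos (hmono _ _ (by omega) (by omega))⟩
  · rw [fragment.sum_buckets (hF0 ▸ hmono 0 _ (by omega) (by omega)) (hmono _ _ (by omega) hsN)
      ((hmono _ _ hsN le_rfl).trans hFn), hstep s hs]
    ring
  · rw [fragment.sum_items, hlevel_zero r hr, sub_zero]
    exact bucketLevel.le_one r (F N)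
  · have hrF : (r : ℝ) < F N := Nat.lt_ceil.1 (by omega)
    rw [fragment.sum_items, hlevel_zero r hr, bucketLevel.eq_one_of_le hrF.le, sub_zero]
  · linarith [hstep s hs, hf_le_one s hs hsN]

/-- Let `N ≥ 1` and `f : {1,…,N} → ℝ` fractions in `[0,1]` with prefix sums
`F s = f 1 + ⋯ + f s` (so `F 0 = 0`), `F N > 0`, and `n = ⌈F N⌉` buckets.  Then there is a
fragment assignment `g : {1,…,N} × {1,…,n} → ℝ` such that:
(i) `g s r ≥ 0`;
(ii) `Σ_{r=1}^{n} g s r = f s` for every item `s`;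
(iii) `Σ_{s=1}^{N} g s r ≤ 1` for every bucket `r`, with equality for `r ≤ n - 1`;
(iv) each item has positive fragments in at most two buckets, and these are consecutive;
(v) the assignment respects the item order: `s < s'`, `g s r > 0`, `g s' r' > 0` imply
`r ≤ r'`. -/
theorem greedy_bucket_construction (N : ℕ) (hN : 1 ≤ N) (f : ℕ → ℝ)
    (hf_nonneg : ∀ s : ℕ, 1 ≤ s → s ≤ N → 0 ≤ f s)
    (hf_le_one : ∀ s : ℕ, 1 ≤ s → s ≤ N → f s ≤ 1)
    (F : ℕ → ℝ) (hF : ∀ s : ℕ, F s = ∑ t ∈ Finset.Icc 1 s, f t)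
    (hFN : 0 < F N)
    (n : ℕ) (hn : n = ⌈F N⌉₊) :
    ∃ g : ℕ → ℕ → ℝ,
      (∀ s r : ℕ, 1 ≤ s → s ≤ N → 1 ≤ r → r ≤ n → 0 ≤ g s r) ∧
      (∀ s : ℕ, 1 ≤ s → s ≤ N → ∑ r ∈ Finset.Icc 1 n, g s r = f s) ∧
      (∀ r : ℕ, 1 ≤ r → r ≤ n → ∑ s ∈ Finset.Icc 1 N, g s r ≤ 1) ∧
      (∀ r : ℕ, 1 ≤ r → r ≤ n - 1 → ∑ s ∈ Finset.Icc 1 N, g s r = 1) ∧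
      (∀ s r r' : ℕ, 1 ≤ s → s ≤ N → 1 ≤ r → r ≤ n → 1 ≤ r' → r' ≤ n → r < r' →
        0 < g s r → 0 < g s r' → r' = r + 1) ∧
      (∀ s s' r r' : ℕ, 1 ≤ s → s ≤ N → 1 ≤ s' → s' ≤ N → s < s' →
        1 ≤ r → r ≤ n → 1 ≤ r' → r' ≤ n → 0 < g s r → 0 < g s' r' → r ≤ r') :=
  greedy_bucket_construction_general N f hf_nonneg hf_le_one F hF n hn
end

section
/- Let E ⊆ V₁ × V₂ × V₃ be the edge set of a finite tripartite 3-uniform hypergraph with nonnegative edge weights u : E → ℝ. Then there exists a matching M ⊆ E such that Σ_{e ∈ M} u(e) ≥ (1/2) · Σ_{e ∈ E} F(e)·u(e) for every fractional matching F of the hypergraph. Equivalently, the maximum weight of an integral matching is at least half of the optimal value of the fractional matching linear program. -/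
/-!
Local ratio over basic solutions. Every fractional matching is dominated, in weight, by a basic
one (a vertex of the polytope), and at a nonzero basic solution `x` some edge `e₀` has
`x e₀ ≥ 1/2`: otherwise every saturated vertex lies on at least three support edges, so double
counting gives #saturated ≤ #support; if some support edge has an unsaturated vertex the count is
strict, and otherwise the saturated rows of `V₁` minus those of `V₂` cancel. Either way the tight
system has rank below #support, and a nonzero direction keeps it tight, contradicting basicness.

The edges meeting `e₀` carry total value at most `3 - 2 x e₀ ≤ 2`. Lowering the weight of every
edge meeting `e₀` by `u e₀` (and dropping the edges whose weight becomes nonpositive, `e₀` among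
them) therefore costs at most `2 u e₀` of LP value, while a matching of the smaller instance
either meets `e₀`, and so regains `u e₀`, or extends by `e₀`. Induction on the number of edges
gives, for each fractional matching, a matching of at least half its value; a matching of
maximal weight then works for all of them at once.
-/

open Finset

namespace Matrix

variable {m n K : Type*} [Fintype n] [Field K]

theorem rank_lt_card_width_iff {A : Matrix m n K} :
    A.rank < Fintype.card n ↔ ∃ v ≠ 0, A *ᵥ v = 0 := by
  have h := A.mulVecLin.finrank_range_add_finrank_ker
  rw [Module.finrank_fintype_fun_eq_card] at h
  rw [show (∃ v ≠ 0, A *ᵥ v = 0) ↔ LinearMap.ker A.mulVecLin ≠ ⊥ by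
    simp [Submodule.ne_bot_iff, and_comm], Ne, ← Submodule.finrank_eq_zero]
  unfold rank
  omega

theorem rank_lt_card_height_of_vecMul_eq_zero [Fintype m] {A : Matrix m n K} {φ : m → K}
    (hφ : φ ≠ 0) (hφA : φ ᵥ* A = 0) : A.rank < Fintype.card m := by
  rw [← rank_transpose]
  exact rank_lt_card_width_iff.2 ⟨φ, hφ, by rw [mulVec_transpose, hφA]⟩

end Matrix

section LinearInequalities

variable {𝕜 V ι : Type*} [Field 𝕜] [LinearOrder 𝕜] [IsStrictOrderedRing 𝕜]
  [AddCommGroup V] [Module 𝕜 V] (s : Finset ι) (a : ι → V →ₗ[𝕜] 𝕜) (b : ι → 𝕜)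

def slackConstraints (x : V) : Finset ι := {i ∈ s | a i x ≠ b i}

variable {s a b}

theorem exists_pos_slackConstraints_add_smul_ssubset {x d : V} (hx : ∀ i ∈ s, a i x ≤ b i)
    (hd : ∀ i ∈ s, a i x = b i → a i d = 0) (hbdd : ∃ i ∈ s, 0 < a i d) :
    ∃ ε : 𝕜, 0 < ε ∧ (∀ i ∈ s, a i (x + ε • d) ≤ b i) ∧
      slackConstraints s a b (x + ε • d) ⊂ slackConstraints s a b x := by
  have hslack : ∀ i ∈ s, 0 < a i d → 0 < b i - a i x := fun i hi h =>
    sub_pos.2 <| (hx i hi).lt_of_ne fun h' => h.ne' (hd i hi h')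
  obtain ⟨i₀, hi₀, hmin⟩ := ({i ∈ s | 0 < a i d}).exists_min_image
    (fun i => (b i - a i x) / a i d) (by simpa [Finset.Nonempty] using hbdd)
  rw [mem_filter] at hi₀
  -- the longest step before a constraint that `d` pushes up becomes tight
  set ε := (b i₀ - a i₀ x) / a i₀ d
  have hε : 0 < ε := div_pos (hslack i₀ hi₀.1 hi₀.2) hi₀.2
  have happly : ∀ i, a i (x + ε • d) = a i x + ε * a i d := fun i => by
    rw [map_add, map_smul, smul_eq_mul]
  refine ⟨ε, hε, fun i hi => ?_, ?_⟩
  · rw [happly]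
    rcases le_or_gt (a i d) 0 with h | h
    · nlinarith [hx i hi]
    · have := (le_div_iff₀ h).1 (hmin i (mem_filter.2 ⟨hi, h⟩))
      linarith
  · have hsub : slackConstraints s a b (x + ε • d) ⊆ slackConstraints s a b x := by
      simp only [slackConstraints, subset_iff, mem_filter]
      refine fun i ⟨hi, hne⟩ => ⟨hi, fun heq => hne ?_⟩
      rw [happly, hd i hi heq, mul_zero, add_zero, heq]
    refine (ssubset_iff_of_subset hsub).2 ⟨i₀, ?_, ?_⟩
    · exact mem_filter.2 ⟨hi₀.1, (sub_pos.1 (hslack i₀ hi₀.1 hi₀.2)).ne⟩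
    · simp only [slackConstraints, mem_filter, happly, not_and, not_not]
      intro _
      rw [div_mul_cancel₀ _ hi₀.2.ne']
      ring

/-- From `y`, no direction keeping the tight constraints tight can be followed a positive
distance both forwards and backwards: in a bounded polyhedron, `y` is a vertex. -/
theorem exists_vertex_le_apply (c : V →ₗ[𝕜] 𝕜) {x : V}
    (hx : ∀ i ∈ s, a i x ≤ b i) :
    ∃ y, (∀ i ∈ s, a i y ≤ b i) ∧ c x ≤ c y ∧
      ∀ d, (∀ i ∈ s, a i y = b i → a i d = 0) → (∃ i ∈ s, 0 < a i d) →
        ∀ i ∈ s, 0 ≤ a i d := by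
  induction hn : (slackConstraints s a b x).card using Nat.strong_induction_on generalizing x
    with
  | _ n ih =>
    by_cases htwo : ∃ d, (∀ i ∈ s, a i x = b i → a i d = 0) ∧ (∃ i ∈ s, 0 < a i d) ∧
        ∃ i ∈ s, a i d < 0
    · obtain ⟨d, hd, hpos, hneg⟩ := htwo
      obtain ⟨d', hd', hbdd', hc⟩ : ∃ d', (∀ i ∈ s, a i x = b i → a i d' = 0) ∧
          (∃ i ∈ s, 0 < a i d') ∧ 0 ≤ c d' := by
        rcases le_total 0 (c d) with h | h
        · exact ⟨d, hd, hpos, h⟩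
        · refine ⟨-d, fun i hi h' => by simp [hd i hi h'], ?_, by simpa using h⟩
          obtain ⟨i, hi, h'⟩ := hneg
          exact ⟨i, hi, by simpa using h'⟩
      obtain ⟨ε, hε, hfeas, hlt⟩ := exists_pos_slackConstraints_add_smul_ssubset hx hd' hbdd'
      obtain ⟨y, hy, hcy, hvert⟩ := ih _ (hn ▸ card_lt_card hlt) hfeas rfl
      refine ⟨y, hy, le_trans ?_ hcy, hvert⟩
      rw [map_add, map_smul, smul_eq_mul]
      nlinarith
    · push Not at htwo
      exact ⟨x, hx, le_rfl, htwo⟩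

end LinearInequalities

namespace TripartiteMatching

variable {V₁ V₂ V₃ : Type*}

def sideSign : V₁ ⊕ V₂ ⊕ V₃ → ℝ
  | .inl _ => 1
  | .inr (.inl _) => -1
  | .inr (.inr _) => 0

variable [DecidableEq V₁] [DecidableEq V₂] [DecidableEq V₃]

def verts (e : V₁ × V₂ × V₃) : Finset (V₁ ⊕ V₂ ⊕ V₃) :=
  {.inl e.1, .inr (.inl e.2.1), .inr (.inr e.2.2)}

@[simp] lemma inl_mem_verts {a : V₁} {e : V₁ × V₂ × V₃} : .inl a ∈ verts e ↔ e.1 = a := by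
  simp [verts, eq_comm]

@[simp] lemma inr_inl_mem_verts {b : V₂} {e : V₁ × V₂ × V₃} :
    .inr (.inl b) ∈ verts e ↔ e.2.1 = b := by
  simp [verts, eq_comm]

@[simp] lemma inr_inr_mem_verts {c : V₃} {e : V₁ × V₂ × V₃} :
    .inr (.inr c) ∈ verts e ↔ e.2.2 = c := by
  simp [verts, eq_comm]

lemma card_verts (e : V₁ × V₂ × V₃) : #(verts e) = 3 := by
  simp [verts]

@[simp] lemma verts_ne_empty (e : V₁ × V₂ × V₃) : verts e ≠ ∅ := by
  simp [verts]

lemma coords_ne_of_disjoint_verts {e e' : V₁ × V₂ × V₃} (h : Disjoint (verts e) (verts e')) :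
    e.1 ≠ e'.1 ∧ e.2.1 ≠ e'.2.1 ∧ e.2.2 ≠ e'.2.2 := by
  simpa [verts] using h.symm

def incidentEdges (E : Finset (V₁ × V₂ × V₃)) (w : V₁ ⊕ V₂ ⊕ V₃) :
    Finset (V₁ × V₂ × V₃) :=
  {e ∈ E | w ∈ verts e}

theorem sum_sum_incidentEdges {M : Type*} [AddCommMonoid M] (E : Finset (V₁ × V₂ × V₃))
    (W : Finset (V₁ ⊕ V₂ ⊕ V₃)) (f : V₁ × V₂ × V₃ → M) :
    ∑ w ∈ W, ∑ e ∈ incidentEdges E w, f e = ∑ e ∈ E, #(W ∩ verts e) • f e := by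
  have := sum_sum_bipartiteAbove_eq_sum_sum_bipartiteBelow (fun w e => w ∈ verts e)
    (s := W) (t := E) (fun _ e => f e)
  simp only [bipartiteAbove, bipartiteBelow, sum_const, filter_mem_eq_inter] at this
  exact this

lemma sum_verts_sideSign (e : V₁ × V₂ × V₃) : ∑ w ∈ verts e, sideSign w = 0 := by
  simp [verts, sideSign]

theorem exists_ne_zero_sum_incidentEdges_eq_zero {S : Finset (V₁ × V₂ × V₃)}
    {T : Finset (V₁ ⊕ V₂ ⊕ V₃)} (hS : S.Nonempty)
    (hT : ∀ w ∈ T, 3 ≤ #(incidentEdges S w)) :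
    ∃ d : V₁ × V₂ × V₃ → ℝ, (∀ e ∉ S, d e = 0) ∧ (∃ e ∈ S, d e ≠ 0) ∧
      ∀ w ∈ T, ∑ e ∈ incidentEdges S w, d e = 0 := by
  set A : Matrix T S ℝ := Matrix.of fun w e => if w.1 ∈ verts e.1 then 1 else 0
  have hcount : 3 * #T ≤ ∑ e ∈ S, #(T ∩ verts e) := by
    have h := sum_sum_incidentEdges S T (fun _ => 1)
    simp only [sum_const, smul_eq_mul, mul_one] at h
    rw [← h, mul_comm]
    simpa using card_nsmul_le_sum T _ 3 hT
  have hle : ∀ e ∈ S, #(T ∩ verts e) ≤ 3 := fun e _ =>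
    (card_le_card inter_subset_right).trans (card_verts e).le
  have hrank : A.rank < Fintype.card S := by
    rw [Fintype.card_coe]
    by_cases hall : ∀ e ∈ S, verts e ⊆ T
    · have hTS : #T ≤ #S := by
        have := sum_le_card_nsmul S _ 3 hle
        simp only [smul_eq_mul] at this
        omega
      refine lt_of_lt_of_le ?_ ((Fintype.card_coe T).trans_le hTS)
      obtain ⟨e, he⟩ := hS
      -- every edge has one vertex in `V₁` and one in `V₂`, all of them rows of `A`
      refine Matrix.rank_lt_card_height_of_vecMul_eq_zero (φ := fun w => sideSign w.1) ?_ ?_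
      · refine Function.ne_iff.2 ⟨⟨.inl e.1, hall e he (by simp)⟩, by simp [sideSign]⟩
      · ext e
        have h := sum_ite_mem T (verts e.1) sideSign
        rw [inter_eq_right.2 (hall e e.2), sum_verts_sideSign, ← sum_coe_sort] at h
        simpa [A, Matrix.vecMul, dotProduct] using h
    · push Not at hall
      obtain ⟨e₀, he₀, hsub⟩ := hall
      have hlt : #(T ∩ verts e₀) < 3 := by
        rw [← card_verts e₀]
        exact card_lt_card ⟨inter_subset_right, fun h => hsub (h.trans inter_subset_left)⟩
      have := sum_lt_sum hle ⟨e₀, he₀, hlt⟩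
      simp only [sum_const, smul_eq_mul] at this
      exact (A.rank_le_card_height.trans_eq (Fintype.card_coe T)).trans_lt (by omega)
  obtain ⟨v, hv, hAv⟩ := Matrix.rank_lt_card_width_iff.1 hrank
  refine ⟨fun e => if h : e ∈ S then v ⟨e, h⟩ else 0, fun e he => dif_neg he, ?_,
    fun w hw => ?_⟩
  · obtain ⟨e, he⟩ := Function.ne_iff.1 hv
    exact ⟨e, e.2, by simpa using he⟩
  · have := congr_fun hAv ⟨w, hw⟩
    rw [incidentEdges, sum_filter, ← sum_coe_sort]
    simpa [A, Matrix.mulVec, dotProduct] using this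

structure IsFractionalMatching (E : Finset (V₁ × V₂ × V₃)) (x : V₁ × V₂ × V₃ → ℝ) : Prop where
  nonneg : ∀ e ∈ E, 0 ≤ x e
  sum_incidentEdges_le_one : ∀ w, ∑ e ∈ incidentEdges E w, x e ≤ 1

lemma IsFractionalMatching.mono {E E' : Finset (V₁ × V₂ × V₃)} {x : V₁ × V₂ × V₃ → ℝ}
    (hx : IsFractionalMatching E x) (h : E' ⊆ E) : IsFractionalMatching E' x where
  nonneg e he := hx.nonneg e (h he)
  sum_incidentEdges_le_one w := le_trans
    (sum_le_sum_of_subset_of_nonneg (filter_subset_filter _ h) fun e he _ =>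
      hx.nonneg e (mem_filter.1 he).1)
    (hx.sum_incidentEdges_le_one w)

/-- Index `.inl e` stands for the constraint `-x e ≤ 0`, index `.inr w` for
`∑ e ∈ incidentEdges E w, x e ≤ 1`; vertices outside `E` carry no constraint. -/
def constraintIndices (E : Finset (V₁ × V₂ × V₃)) :
    Finset ((V₁ × V₂ × V₃) ⊕ (V₁ ⊕ V₂ ⊕ V₃)) :=
  E.disjSum (E.biUnion verts)

def constraintMap (E : Finset (V₁ × V₂ × V₃)) :
    (V₁ × V₂ × V₃) ⊕ (V₁ ⊕ V₂ ⊕ V₃) → (V₁ × V₂ × V₃ → ℝ) →ₗ[ℝ] ℝ :=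
  Sum.elim (fun e => -LinearMap.proj e) (fun w => ∑ e ∈ incidentEdges E w, LinearMap.proj e)

def constraintBound : (V₁ × V₂ × V₃) ⊕ (V₁ ⊕ V₂ ⊕ V₃) → ℝ :=
  Sum.elim 0 1

@[simp] lemma constraintMap_inl (E : Finset (V₁ × V₂ × V₃)) (e : V₁ × V₂ × V₃)
    (x : V₁ × V₂ × V₃ → ℝ) : constraintMap E (.inl e) x = -x e := rfl

@[simp] lemma constraintMap_inr (E : Finset (V₁ × V₂ × V₃)) (w : V₁ ⊕ V₂ ⊕ V₃)
    (x : V₁ × V₂ × V₃ → ℝ) : constraintMap E (.inr w) x = ∑ e ∈ incidentEdges E w, x e := by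
  simp [constraintMap]

lemma incidentEdges_eq_empty {E : Finset (V₁ × V₂ × V₃)} {w : V₁ ⊕ V₂ ⊕ V₃}
    (hw : w ∉ E.biUnion verts) : incidentEdges E w = ∅ :=
  filter_eq_empty_iff.2 fun e he hwe => hw (mem_biUnion.2 ⟨e, he, hwe⟩)

theorem isFractionalMatching_iff {E : Finset (V₁ × V₂ × V₃)} {x : V₁ × V₂ × V₃ → ℝ} :
    IsFractionalMatching E x ↔
      ∀ i ∈ constraintIndices E, constraintMap E i x ≤ constraintBound i := by
  constructor
  · rintro hx (e | w) hi
    · simpa [constraintBound] using hx.nonneg e (inl_mem_disjSum.1 hi)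
    · simpa [constraintBound] using hx.sum_incidentEdges_le_one w
  · refine fun h => ⟨fun e he => ?_, fun w => ?_⟩
    · simpa [constraintBound] using h (.inl e) (inl_mem_disjSum.2 he)
    · by_cases hw : w ∈ E.biUnion verts
      · simpa [constraintBound] using h (.inr w) (inr_mem_disjSum.2 hw)
      · simp [incidentEdges_eq_empty hw]

theorem exists_constraintMap_pos {E : Finset (V₁ × V₂ × V₃)} {d : V₁ × V₂ × V₃ → ℝ}
    {e : V₁ × V₂ × V₃} (he : e ∈ E) (hd : d e ≠ 0) :
    ∃ i ∈ constraintIndices E, 0 < constraintMap E i d := by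
  by_cases hneg : ∃ e' ∈ E, d e' < 0
  · obtain ⟨e', he', hlt⟩ := hneg
    exact ⟨.inl e', inl_mem_disjSum.2 he', by simpa using hlt⟩
  · push Not at hneg
    refine ⟨.inr (.inl e.1), inr_mem_disjSum.2 (mem_biUnion.2 ⟨e, he, by simp⟩), ?_⟩
    rw [constraintMap_inr]
    exact (lt_of_le_of_ne (hneg e he) (Ne.symm hd)).trans_le <|
      single_le_sum (fun e' he' => hneg e' (mem_filter.1 he').1) (mem_filter.2 ⟨he, by simp⟩)

/-- `x` is a basic solution of the fractional matching polytope of `E`. -/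
def IsBasic (E : Finset (V₁ × V₂ × V₃)) (x : V₁ × V₂ × V₃ → ℝ) : Prop :=
  ∀ d : V₁ × V₂ × V₃ → ℝ, (∀ e ∈ E, x e = 0 → d e = 0) →
    (∀ w, ∑ e ∈ incidentEdges E w, x e = 1 → ∑ e ∈ incidentEdges E w, d e = 0) →
      ∀ e ∈ E, d e = 0

theorem IsFractionalMatching.exists_isBasic_le {E : Finset (V₁ × V₂ × V₃)}
    {x : V₁ × V₂ × V₃ → ℝ} (hx : IsFractionalMatching E x) (u : V₁ × V₂ × V₃ → ℝ) :
    ∃ y, IsFractionalMatching E y ∧ IsBasic E y ∧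
      ∑ e ∈ E, x e * u e ≤ ∑ e ∈ E, y e * u e := by
  obtain ⟨y, hy, hxy, hvert⟩ := exists_vertex_le_apply
    (∑ e ∈ E, u e • LinearMap.proj e) (isFractionalMatching_iff.1 hx)
  refine ⟨y, isFractionalMatching_iff.2 hy, fun d hd₀ hd₁ => ?_, by simpa [mul_comm] using hxy⟩
  by_contra! hne
  obtain ⟨e, he, hde⟩ := hne
  have htight : ∀ i ∈ constraintIndices E, constraintMap E i y = constraintBound i →
      constraintMap E i d = 0 := by
    rintro (e' | w) hi h
    · simpa using hd₀ e' (inl_mem_disjSum.1 hi) (by simpa [constraintBound] using h)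
    · simpa using hd₁ w (by simpa [constraintBound] using h)
  obtain ⟨i, hi, hneg⟩ := exists_constraintMap_pos (d := -d) he (neg_ne_zero.2 hde)
  have := hvert d htight (exists_constraintMap_pos he hde) i hi
  simp only [map_neg] at hneg
  linarith

theorem IsBasic.exists_half_le {E : Finset (V₁ × V₂ × V₃)} {x : V₁ × V₂ × V₃ → ℝ}
    (hx : IsBasic E x) (hne : ∃ e ∈ E, x e ≠ 0) : ∃ e ∈ E, 1 / 2 ≤ x e := by
  by_contra! hsmall
  set S := {e ∈ E | x e ≠ 0}
  set T := {w ∈ E.biUnion verts | ∑ e ∈ incidentEdges E w, x e = 1}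
  have hsupp : ∀ w, ∑ e ∈ incidentEdges S w, x e = ∑ e ∈ incidentEdges E w, x e := fun w => by
    rw [incidentEdges, incidentEdges, filter_comm]
    exact sum_filter_ne_zero _
  have hT : ∀ w ∈ T, 3 ≤ #(incidentEdges S w) := by
    intro w hw
    have hsum : ∑ e ∈ incidentEdges S w, x e = 1 := (hsupp w).trans (mem_filter.1 hw).2
    have hlt := sum_lt_sum_of_nonempty (s := incidentEdges S w) (g := fun _ => (1 / 2 : ℝ))
      (nonempty_of_sum_ne_zero (hsum ▸ one_ne_zero))
      fun e he => hsmall e (mem_filter.1 (mem_filter.1 he).1).1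
    rw [hsum, sum_const, nsmul_eq_mul] at hlt
    have : (2 : ℝ) < #(incidentEdges S w) := by linarith
    exact_mod_cast this
  obtain ⟨e₀, he₀, hxe₀⟩ := hne
  obtain ⟨d, hdS, ⟨e, he, hde⟩, hd⟩ :=
    exists_ne_zero_sum_incidentEdges_eq_zero ⟨e₀, mem_filter.2 ⟨he₀, hxe₀⟩⟩ hT
  refine hde (hx d (fun e' he' h0 => hdS e' fun h => (mem_filter.1 h).2 h0) (fun w hw => ?_) e
    (mem_filter.1 he).1)
  obtain ⟨e', he'⟩ := nonempty_of_sum_ne_zero (hw ▸ one_ne_zero)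
  have hwT : w ∈ T :=
    mem_filter.2 ⟨mem_biUnion.2 ⟨e', (mem_filter.1 he').1, (mem_filter.1 he').2⟩, hw⟩
  rw [← hd w hwT]
  refine (sum_subset (filter_subset_filter _ (filter_subset _ _)) fun e he hnS => ?_).symm
  exact hdS e fun heS => hnS (mem_filter.2 ⟨heS, (mem_filter.1 he).2⟩)

theorem IsFractionalMatching.sum_not_disjoint_add_le {E : Finset (V₁ × V₂ × V₃)}
    {x : V₁ × V₂ × V₃ → ℝ} (hx : IsFractionalMatching E x) {e₀ : V₁ × V₂ × V₃}
    (he₀ : e₀ ∈ E) : ∑ e ∈ E with ¬Disjoint (verts e₀) (verts e), x e + 2 * x e₀ ≤ 3 := by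
  have hpt : ∀ e ∈ E, (if ¬Disjoint (verts e₀) (verts e) then x e else 0) +
      (if e₀ = e then 2 * x e else 0) ≤ #(verts e₀ ∩ verts e) • x e := by
    intro e he
    have hxe := hx.nonneg e he
    rw [nsmul_eq_mul]
    by_cases h : e₀ = e
    · subst h
      simp [card_verts]
      linarith
    by_cases hd : Disjoint (verts e₀) (verts e)
    · simp [hd, h]
      positivity
    · have : (1 : ℝ) ≤ #(verts e₀ ∩ verts e) := by
        exact_mod_cast (not_disjoint_iff_nonempty_inter.1 hd).card_pos
      simp only [hd, h, not_false_eq_true, if_true, if_false]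
      nlinarith
  calc ∑ e ∈ E with ¬Disjoint (verts e₀) (verts e), x e + 2 * x e₀
      = ∑ e ∈ E, ((if ¬Disjoint (verts e₀) (verts e) then x e else 0) +
          (if e₀ = e then 2 * x e else 0)) := by
        rw [sum_add_distrib, sum_filter, sum_ite_eq, if_pos he₀]
    _ ≤ ∑ e ∈ E, #(verts e₀ ∩ verts e) • x e := sum_le_sum hpt
    _ = ∑ w ∈ verts e₀, ∑ e ∈ incidentEdges E w, x e :=
        (sum_sum_incidentEdges E (verts e₀) x).symm
    _ ≤ ∑ _w ∈ verts e₀, 1 := sum_le_sum fun w _ => hx.sum_incidentEdges_le_one w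
    _ = 3 := by simp [card_verts]

def localRatioWeight (u : V₁ × V₂ × V₃ → ℝ) (e₀ e : V₁ × V₂ × V₃) : ℝ :=
  if Disjoint (verts e₀) (verts e) then u e else u e - u e₀

theorem sum_mul_le_sum_localRatioWeight_add {E : Finset (V₁ × V₂ × V₃)}
    {x : V₁ × V₂ × V₃ → ℝ} (hx : ∀ e ∈ E, 0 ≤ x e) (u : V₁ × V₂ × V₃ → ℝ)
    (e₀ : V₁ × V₂ × V₃) :
    ∑ e ∈ E, x e * u e ≤ ∑ e ∈ E with 0 < localRatioWeight u e₀ e, x e * localRatioWeight u e₀ e +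
      u e₀ * ∑ e ∈ E with ¬Disjoint (verts e₀) (verts e), x e := by
  rw [sum_filter, sum_filter, mul_sum, ← sum_add_distrib]
  refine sum_le_sum fun e he => ?_
  have hxe := hx e he
  unfold localRatioWeight
  split_ifs <;> nlinarith

theorem exists_pairwiseDisjoint_sum_localRatioWeight_add_le {M : Finset (V₁ × V₂ × V₃)}
    (hM : (M : Set (V₁ × V₂ × V₃)).PairwiseDisjoint verts) {u : V₁ × V₂ × V₃ → ℝ}
    {e₀ : V₁ × V₂ × V₃} (hu₀ : 0 ≤ u e₀) :
    ∃ M₀ ⊆ insert e₀ M, (M₀ : Set (V₁ × V₂ × V₃)).PairwiseDisjoint verts ∧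
      ∑ e ∈ M, localRatioWeight u e₀ e + u e₀ ≤ ∑ e ∈ M₀, u e := by
  by_cases hmeet : ∃ m ∈ M, ¬Disjoint (verts e₀) (verts m)
  · obtain ⟨m, hm, hdisj⟩ := hmeet
    refine ⟨M, subset_insert _ _, hM, ?_⟩
    have hdrop : ∀ e, 0 ≤ u e - localRatioWeight u e₀ e := fun e => by
      unfold localRatioWeight
      split_ifs <;> simp [hu₀]
    have hdrop_m : u m - localRatioWeight u e₀ m = u e₀ := by
      simp [localRatioWeight, hdisj]
    have := single_le_sum (fun e _ => hdrop e) hm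
    rw [hdrop_m, sum_sub_distrib] at this
    linarith
  · push Not at hmeet
    have he₀M : e₀ ∉ M := fun h => by simpa using hmeet e₀ h
    refine ⟨insert e₀ M, subset_rfl, ?_, ?_⟩
    · rw [coe_insert]
      exact hM.insert fun m hm _ => hmeet m hm
    · rw [sum_insert he₀M, add_comm]
      gcongr with m hm
      simp [localRatioWeight, hmeet m hm]

theorem exists_pairwiseDisjoint_sum_mul_le_two_mul (E : Finset (V₁ × V₂ × V₃))
    (u : V₁ × V₂ × V₃ → ℝ) (hu : ∀ e ∈ E, 0 ≤ u e) {x : V₁ × V₂ × V₃ → ℝ}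
    (hx : IsFractionalMatching E x) :
    ∃ M ⊆ E, (M : Set (V₁ × V₂ × V₃)).PairwiseDisjoint verts ∧
      ∑ e ∈ E, x e * u e ≤ 2 * ∑ e ∈ M, u e := by
  induction E using Finset.strongInduction generalizing u x with
  | H E ih =>
  obtain ⟨y, hy, hyb, hxy⟩ := hx.exists_isBasic_le u
  by_cases hne : ∃ e ∈ E, y e ≠ 0
  swap
  · push Not at hne
    refine ⟨∅, empty_subset _, by simp, ?_⟩
    have hy0 : ∑ e ∈ E, y e * u e = 0 := sum_eq_zero fun e he => by simp [hne e he]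
    simpa [hy0] using hxy
  obtain ⟨e₀, he₀, hhalf⟩ := hyb.exists_half_le hne
  set u' := localRatioWeight u e₀
  have hE' : {e ∈ E | 0 < u' e} ⊂ E :=
    filter_ssubset.2 ⟨e₀, he₀, by simp [u', localRatioWeight]⟩
  obtain ⟨M', hM'E, hM', hM'u⟩ := ih _ hE' u' (fun e he => (mem_filter.1 he).2.le)
    (hy.mono (filter_subset _ _))
  obtain ⟨M, hMsub, hM, hMu⟩ := exists_pairwiseDisjoint_sum_localRatioWeight_add_le hM'
    (hu e₀ he₀)
  refine ⟨M, hMsub.trans (insert_subset he₀ (hM'E.trans (filter_subset _ _))), hM, ?_⟩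
  have hnbhd := hy.sum_not_disjoint_add_le he₀
  have hu₀ := hu e₀ he₀
  calc ∑ e ∈ E, x e * u e ≤ ∑ e ∈ E, y e * u e := hxy
    _ ≤ ∑ e ∈ E with 0 < u' e, y e * u' e +
        u e₀ * ∑ e ∈ E with ¬Disjoint (verts e₀) (verts e), y e :=
      sum_mul_le_sum_localRatioWeight_add hy.nonneg u e₀
    _ ≤ 2 * ∑ e ∈ M', u' e + 2 * u e₀ := by nlinarith
    _ ≤ 2 * ∑ e ∈ M, u e := by linarith

end TripartiteMatching

open TripartiteMatching in
/-- Let `E ⊆ V₁ × V₂ × V₃` be the (finite) edge set of a tripartite 3-uniform hypergraph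
with nonnegative edge weights `u`.  Then there exists a matching `M ⊆ E` (a set of edges
pairwise differing in all three coordinates) whose total weight is at least half of the
value `Σ_{e ∈ E} F e * u e` of every fractional matching `F` (i.e. `F ≥ 0` on `E` and the
total fraction of edges incident to any vertex is at most `1`).  In particular the maximum
weight of an integral matching is at least half the optimum of the fractional matching LP. -/
theorem half_integrality_tripartite_matching {V₁ V₂ V₃ : Type*}
    [DecidableEq V₁] [DecidableEq V₂] [DecidableEq V₃]
    (E : Finset (V₁ × V₂ × V₃)) (u : V₁ × V₂ × V₃ → ℝ)
    (hu : ∀ e ∈ E, 0 ≤ u e) :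
    ∃ M : Finset (V₁ × V₂ × V₃), M ⊆ E ∧
      (∀ e ∈ M, ∀ e' ∈ M, e ≠ e' →
        e.1 ≠ e'.1 ∧ e.2.1 ≠ e'.2.1 ∧ e.2.2 ≠ e'.2.2) ∧
      ∀ F : V₁ × V₂ × V₃ → ℝ,
        (∀ e ∈ E, 0 ≤ F e) →
        (∀ v₁ : V₁, ∑ e ∈ E.filter (fun e => e.1 = v₁), F e ≤ 1) →
        (∀ v₂ : V₂, ∑ e ∈ E.filter (fun e => e.2.1 = v₂), F e ≤ 1) →
        (∀ v₃ : V₃, ∑ e ∈ E.filter (fun e => e.2.2 = v₃), F e ≤ 1) →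
        (1 / 2) * ∑ e ∈ E, F e * u e ≤ ∑ e ∈ M, u e := by
  classical
  obtain ⟨M, hM, hMmax⟩ := (E.powerset.filter fun M : Finset (V₁ × V₂ × V₃) =>
    (M : Set (V₁ × V₂ × V₃)).PairwiseDisjoint verts).exists_max_image
    (fun M => ∑ e ∈ M, u e) ⟨∅, by simp⟩
  rw [mem_filter, mem_powerset] at hM
  refine ⟨M, hM.1, fun e he e' he' hne => coords_ne_of_disjoint_verts (hM.2 he he' hne),
    fun F hF h₁ h₂ h₃ => ?_⟩
  have hF : IsFractionalMatching E F := ⟨hF, by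
    rintro (v₁ | v₂ | v₃)
    · simpa [incidentEdges] using h₁ v₁
    · simpa [incidentEdges] using h₂ v₂
    · simpa [incidentEdges] using h₃ v₃⟩
  obtain ⟨M', hM'E, hM', hle⟩ := exists_pairwiseDisjoint_sum_mul_le_two_mul E u hu hF
  have := hMmax M' (mem_filter.2 ⟨mem_powerset.2 hM'E, hM'⟩)
  linarith
end
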